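/- arXiv:2504.15042 — 2 statements merged into one kernel-verified Lean document; each statement's English description precedes it below -/
import Mathlib

section
/- Let R = A S Aᴴ + σ² I_M, where A ∈ ℂ^{M×L} has full column rank L < M, S ∈ ℂ^{L×L} is Hermitian positive definite, and σ² > 0. Then R is Hermitian positive definite, the eigenvalue σ² of R has multiplicity exactly M − L, and the eigenspace of R for eigenvalue σ² equals the orthogonal complement of the column space of A. -/
/-!
A vector `x` satisfies `R x = σ² x` iff `A S Aᴴ x = 0`. Since `S` is positive definite,
`A S Aᴴ x = 0` forces `(Aᴴ x)ᴴ S (Aᴴ x) = 0` and hence `Aᴴ x = 0`, so the `σ²`-eigenspace is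
`ker Aᴴ`, of dimension `M - rank A = M - L` by rank–nullity. Positive definiteness of `R` is
that of the positive semidefinite `A S Aᴴ` plus the positive scalar `σ² I`.
-/

open Matrix
open scoped ComplexOrder

namespace Matrix

variable {m n K : Type*} [Fintype n]

theorem rank_add_finrank_ker_mulVecLin [Field K] (A : Matrix m n K) :
    A.rank + Module.finrank K (LinearMap.ker A.mulVecLin) = Fintype.card n := by
  rw [rank, LinearMap.finrank_range_add_finrank_ker, Module.finrank_fintype_fun_eq_card]

theorem add_smul_one_mulVec_eq_smul_iff [Fintype m] [CommRing K] [DecidableEq m]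
    (B : Matrix m m K) (c : K) (x : m → K) : (B + c • 1) *ᵥ x = c • x ↔ B *ᵥ x = 0 := by
  rw [add_mulVec, smul_mulVec, one_mulVec, add_eq_right]

theorem PosDef.mul_mul_conjTranspose_mulVec_eq_zero_iff [Fintype m] [Field K] [PartialOrder K]
    [StarRing K] [StarOrderedRing K] {S : Matrix n n K} (hS : S.PosDef) (A : Matrix m n K)
    (x : m → K) : (A * S * Aᴴ) *ᵥ x = 0 ↔ Aᴴ *ᵥ x = 0 := by
  refine ⟨fun h => ?_, fun h => by
    rw [← mulVec_mulVec, ← mulVec_mulVec, h, mulVec_zero, mulVec_zero]⟩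
  have hquad : star (Aᴴ *ᵥ x) ⬝ᵥ S *ᵥ (Aᴴ *ᵥ x) = 0 := by
    rw [star_mulVec, conjTranspose_conjTranspose, ← dotProduct_mulVec, mulVec_mulVec,
      mulVec_mulVec, h, dotProduct_zero]
  by_contra hne
  exact (hS.dotProduct_mulVec_pos hne).ne' hquad

end Matrix

theorem music_eigenstructure_general {M L : ℕ}
    (A : Matrix (Fin M) (Fin L) ℂ) (hA : A.rank = L)
    (S : Matrix (Fin L) (Fin L) ℂ) (hS : S.PosDef)
    (σ2 : ℝ) (hσ2 : 0 < σ2)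
    (R : Matrix (Fin M) (Fin M) ℂ)
    (hR : R = A * S * Aᴴ + (σ2 : ℂ) • (1 : Matrix (Fin M) (Fin M) ℂ)) :
    R.PosDef ∧
    (∀ x : Fin M → ℂ, (R *ᵥ x = (σ2 : ℂ) • x ↔ Aᴴ *ᵥ x = 0)) ∧
    Module.finrank ℂ (Module.End.eigenspace R.mulVecLin (σ2 : ℂ)) = M - L := by
  subst hR
  have hσ2' : (0 : ℂ) < σ2 := by exact_mod_cast hσ2
  have hnoise (x : Fin M → ℂ) :
      (A * S * Aᴴ + (σ2 : ℂ) • 1) *ᵥ x = (σ2 : ℂ) • x ↔ Aᴴ *ᵥ x = 0 :=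
    (add_smul_one_mulVec_eq_smul_iff _ _ x).trans
      (hS.mul_mul_conjTranspose_mulVec_eq_zero_iff A x)
  have heig : Module.End.eigenspace (A * S * Aᴴ + (σ2 : ℂ) • 1).mulVecLin (σ2 : ℂ)
      = LinearMap.ker Aᴴ.mulVecLin := by
    ext x
    simpa only [Module.End.mem_eigenspace_iff, LinearMap.mem_ker, mulVecLin_apply] using hnoise x
  refine ⟨PosDef.posSemidef_add (hS.posSemidef.mul_mul_conjTranspose_same A)
    (PosDef.one.smul hσ2'), hnoise, ?_⟩
  have hdim := rank_add_finrank_ker_mulVecLin Aᴴ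
  rw [rank_conjTranspose, hA, Fintype.card_fin] at hdim
  rw [heig]
  omega

/-- MUSIC eigenstructure: if `R = A S Aᴴ + σ² I` with `A ∈ ℂ^{M×L}` of full column rank
`L < M`, `S` Hermitian positive definite and `σ² > 0`, then `R` is (Hermitian) positive
definite, the eigenspace of `R` for the eigenvalue `σ²` is exactly the orthogonal
complement of the column space of `A` (i.e. the kernel of `Aᴴ`), and this eigenvalue has
multiplicity exactly `M - L`. -/
theorem music_eigenstructure {M L : ℕ} (hLM : L < M)
    (A : Matrix (Fin M) (Fin L) ℂ) (hA : A.rank = L)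
    (S : Matrix (Fin L) (Fin L) ℂ) (hS : S.PosDef)
    (σ2 : ℝ) (hσ2 : 0 < σ2)
    (R : Matrix (Fin M) (Fin M) ℂ)
    (hR : R = A * S * Aᴴ + (σ2 : ℂ) • (1 : Matrix (Fin M) (Fin M) ℂ)) :
    R.PosDef ∧
    (∀ x : Fin M → ℂ, (R *ᵥ x = (σ2 : ℂ) • x ↔ Aᴴ *ᵥ x = 0)) ∧
    Module.finrank ℂ (Module.End.eigenspace R.mulVecLin (σ2 : ℂ)) = M - L :=
  music_eigenstructure_general A hA S hS σ2 hσ2 R hR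
end

section
/- Under the MUSIC setup R = A S Aᴴ + σ² I_M with A having full column rank and S positive definite, if U_N ∈ ℂ^{M×(M−L)} has orthonormal columns spanning the eigenspace of R with eigenvalue σ², then for any column a of A one has U_Nᴴ a = 0; consequently the MUSIC spectrum P(τ) = 1/(a(τ)ᴴ U_N U_Nᴴ a(τ)) has a pole (the denominator vanishes) exactly when a(τ) lies in the column space of A. -/
open Matrix
open scoped ComplexOrder

/-!
The eigenspace of `R = A S Aᴴ + σ² I` for `σ²` is `ker (A S Aᴴ)`, which equals `ker Aᴴ` because
`S` is positive definite: `A S Aᴴ x = 0` forces `(Aᴴ x)ᴴ S (Aᴴ x) = 0`. So `range U_N = ker Aᴴ`,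
and taking orthogonal complements gives `ker U_Nᴴ = range A`. Finally
`vᴴ U_N U_Nᴴ v = ‖U_Nᴴ v‖²` vanishes exactly when `v ∈ ker U_Nᴴ`.
-/

namespace Matrix

variable {m n k R 𝕜 : Type*} [Fintype m] [Fintype n] [Fintype k]

theorem eigenspace_mulVecLin_add_smul_one [CommRing R] [DecidableEq n] (B : Matrix n n R)
    (c : R) :
    Module.End.eigenspace (B + c • 1).mulVecLin c = LinearMap.ker B.mulVecLin := by
  ext x
  simp only [Module.End.mem_eigenspace_iff, LinearMap.mem_ker, mulVecLin_apply, add_mulVec,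
    smul_mulVec, one_mulVec, add_eq_right]

theorem ker_mulVecLin_mul_mul_conjTranspose [CommRing R] [PartialOrder R] [StarRing R]
    {S : Matrix n n R} (hS : S.PosDef) (A : Matrix m n R) :
    LinearMap.ker (A * S * Aᴴ).mulVecLin = LinearMap.ker Aᴴ.mulVecLin := by
  ext x
  simp only [LinearMap.mem_ker, mulVecLin_apply]
  refine ⟨fun hx => ?_, fun hx => by rw [← mulVec_mulVec, hx, mulVec_zero]⟩
  by_contra hne
  have hquad : star (Aᴴ *ᵥ x) ⬝ᵥ (S *ᵥ (Aᴴ *ᵥ x)) = star x ⬝ᵥ ((A * S * Aᴴ) *ᵥ x) := by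
    rw [star_mulVec, conjTranspose_conjTranspose, ← dotProduct_mulVec, mulVec_mulVec,
      mulVec_mulVec]
  exact (hS.dotProduct_mulVec_pos hne).ne' (by rw [hquad, hx, dotProduct_zero])

variable [RCLike 𝕜]

theorem star_mulVec_dotProduct (B : Matrix m k 𝕜) (c : k → 𝕜) (v : m → 𝕜) :
    star (B *ᵥ c) ⬝ᵥ v = star c ⬝ᵥ (Bᴴ *ᵥ v) := by
  rw [star_mulVec, dotProduct_mulVec]

theorem conjTranspose_mulVec_eq_zero_iff (B : Matrix m k 𝕜) (v : m → 𝕜) :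
    Bᴴ *ᵥ v = 0 ↔ ∀ x ∈ LinearMap.range B.mulVecLin, star x ⬝ᵥ v = 0 := by
  refine ⟨fun hv => ?_, fun hv => ?_⟩
  · rintro _ ⟨c, rfl⟩
    rw [mulVecLin_apply, star_mulVec_dotProduct, hv, dotProduct_zero]
  · refine dotProduct_star_self_eq_zero.mp ?_
    rw [← star_mulVec_dotProduct]
    exact hv _ ⟨_, rfl⟩

theorem star_dotProduct_mul_conjTranspose_mulVec_eq_zero_iff (U : Matrix m k 𝕜) (v : m → 𝕜) :
    star v ⬝ᵥ ((U * Uᴴ) *ᵥ v) = 0 ↔ Uᴴ *ᵥ v = 0 := by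
  have h := star_mulVec_dotProduct Uᴴ v (Uᴴ *ᵥ v)
  rw [conjTranspose_conjTranspose] at h
  rw [← mulVec_mulVec, ← h, dotProduct_star_self_eq_zero]

variable [DecidableEq m] [DecidableEq n]

theorem mem_range_mulVecLin_iff (A : Matrix m n 𝕜) (v : m → 𝕜) :
    v ∈ LinearMap.range A.mulVecLin ↔
      ∀ x ∈ LinearMap.ker Aᴴ.mulVecLin, star x ⬝ᵥ v = 0 := by
  have hrange := LinearMap.orthogonal_ker (toEuclideanLin Aᴴ)
  rw [← toEuclideanLin_conjTranspose_eq_adjoint, conjTranspose_conjTranspose] at hrange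
  have hv : v ∈ LinearMap.range A.mulVecLin ↔
      WithLp.toLp 2 v ∈ LinearMap.range (toEuclideanLin A) :=
    ⟨fun ⟨c, hc⟩ => ⟨WithLp.toLp 2 c, congrArg (WithLp.toLp 2) hc⟩,
      fun ⟨c, hc⟩ => ⟨WithLp.ofLp c, congrArg WithLp.ofLp hc⟩⟩
  rw [hv, ← hrange, Submodule.mem_orthogonal]
  refine ⟨fun H x hx => ?_, fun H u hu => ?_⟩
  · rw [dotProduct_comm, ← EuclideanSpace.inner_toLp_toLp]
    exact H _ (congrArg (WithLp.toLp 2) hx)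
  · rw [EuclideanSpace.inner_eq_star_dotProduct, dotProduct_comm]
    exact H _ (congrArg WithLp.ofLp hu)

theorem ker_conjTranspose_eq_range_of_range_eq_ker {B : Matrix m k 𝕜} {A : Matrix m n 𝕜}
    (h : LinearMap.range B.mulVecLin = LinearMap.ker Aᴴ.mulVecLin) :
    LinearMap.ker Bᴴ.mulVecLin = LinearMap.range A.mulVecLin := by
  ext v
  rw [LinearMap.mem_ker, mulVecLin_apply, conjTranspose_mulVec_eq_zero_iff, h,
    mem_range_mulVecLin_iff]

end Matrix

theorem music_noise_subspace_orthogonality_general {M L : ℕ}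
    (A : Matrix (Fin M) (Fin L) ℂ)
    (S : Matrix (Fin L) (Fin L) ℂ) (hS : S.PosDef)
    (σ2 : ℝ)
    (R : Matrix (Fin M) (Fin M) ℂ)
    (hR : R = A * S * Aᴴ + (σ2 : ℂ) • (1 : Matrix (Fin M) (Fin M) ℂ))
    (UN : Matrix (Fin M) (Fin (M - L)) ℂ)
    (hUspan : LinearMap.range UN.mulVecLin
        = Module.End.eigenspace R.mulVecLin (σ2 : ℂ)) :
    (∀ l : Fin L, UNᴴ *ᵥ (fun i => A i l) = 0) ∧
    (∀ v : Fin M → ℂ,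
      star v ⬝ᵥ ((UN * UNᴴ) *ᵥ v) = 0 ↔ v ∈ LinearMap.range A.mulVecLin) := by
  have hker : LinearMap.ker UNᴴ.mulVecLin = LinearMap.range A.mulVecLin := by
    refine ker_conjTranspose_eq_range_of_range_eq_ker ?_
    rw [hUspan, hR, eigenspace_mulVecLin_add_smul_one, ker_mulVecLin_mul_mul_conjTranspose hS]
  have hUN (v : Fin M → ℂ) : UNᴴ *ᵥ v = 0 ↔ v ∈ LinearMap.range A.mulVecLin := by
    rw [← hker, LinearMap.mem_ker, mulVecLin_apply]
  refine ⟨fun l => (hUN _).mpr ⟨Pi.single l 1, mulVec_single_one A l⟩, fun v => ?_⟩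
  rw [star_dotProduct_mul_conjTranspose_mulVec_eq_zero_iff, hUN]

/-- MUSIC noise subspace orthogonality: under `R = A S Aᴴ + σ² I` with `A` of full column
rank and `S` positive definite, if the columns of `U_N` are orthonormal and span the
eigenspace of `R` for eigenvalue `σ²`, then `U_Nᴴ a = 0` for every column `a` of `A`;
consequently the denominator `vᴴ U_N U_Nᴴ v` of the MUSIC spectrum vanishes exactly when
`v` lies in the column space of `A`. -/
theorem music_noise_subspace_orthogonality {M L : ℕ} (hLM : L < M)
    (A : Matrix (Fin M) (Fin L) ℂ) (hA : A.rank = L)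
    (S : Matrix (Fin L) (Fin L) ℂ) (hS : S.PosDef)
    (σ2 : ℝ) (hσ2 : 0 < σ2)
    (R : Matrix (Fin M) (Fin M) ℂ)
    (hR : R = A * S * Aᴴ + (σ2 : ℂ) • (1 : Matrix (Fin M) (Fin M) ℂ))
    (UN : Matrix (Fin M) (Fin (M - L)) ℂ)
    (hUortho : UNᴴ * UN = 1)
    (hUspan : LinearMap.range UN.mulVecLin
        = Module.End.eigenspace R.mulVecLin (σ2 : ℂ)) :
    (∀ l : Fin L, UNᴴ *ᵥ (fun i => A i l) = 0) ∧
    (∀ v : Fin M → ℂ,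
      star v ⬝ᵥ ((UN * UNᴴ) *ᵥ v) = 0 ↔ v ∈ LinearMap.range A.mulVecLin) :=
  music_noise_subspace_orthogonality_general A S hS σ2 R hR UN hUspan
end
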